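/- arXiv:2208.00413 — 2 statements merged into one kernel-verified Lean document; each statement's English description precedes it below -/
import Mathlib

section
/- Fix r ≥ 3 and R > 0. For any s > s₀ > d/2 there exists a constant C_{r,s} > 0 such that for every P ∈ 𝒫_r and every u ∈ ℓ²_s with ‖u‖_s < R one has ‖X_P(u)‖_s ≤ C_{r,s} · ‖P‖_R / R. -/
open scoped BigOperators

namespace AG

abbrev Zd (d : ℕ) := Fin d → ℤ

noncomputable def enorm {d : ℕ} (j : Zd d) : ℝ := Real.sqrt (∑ i, ((j i : ℝ))^2)

abbrev Idx (d : ℕ) := Zd d × Bool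

noncomputable def inorm {d : ℕ} (J : Idx d) : ℝ := enorm J.1

def sgn (b : Bool) : ℤ := if b then 1 else -1

noncomputable def sgnC (b : Bool) : ℂ := if b then 1 else -1

def conjIdx {d : ℕ} (J : Idx d) : Idx d := (J.1, !J.2)

abbrev Seq (d : ℕ) := Idx d → ℂ

noncomputable def sobNormSq (d : ℕ) (s : ℝ) (u : Seq d) : ℝ :=
  ∑' J : Idx d, (1 + inorm J) ^ (2 * s) * ‖u J‖ ^ 2

noncomputable def sobNorm (d : ℕ) (s : ℝ) (u : Seq d) : ℝ := Real.sqrt (sobNormSq d s u)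

def MemSob (d : ℕ) (s : ℝ) (u : Seq d) : Prop :=
  Summable (fun J : Idx d => (1 + inorm J) ^ (2 * s) * ‖u J‖ ^ 2)

noncomputable def momentum {d r : ℕ} (Jv : Fin r → Idx d) : Zd d :=
  ∑ l, sgn ((Jv l).2) • ((Jv l).1)

structure Poly (d r : ℕ) where
  coeff : (Fin r → Idx d) → ℂ
  symm : ∀ (π : Equiv.Perm (Fin r)) (Jv : Fin r → Idx d), coeff (Jv ∘ π) = coeff Jv
  mom : ∀ Jv, coeff Jv ≠ 0 → momentum Jv = 0
  reality : ∀ Jv, (starRingEnd ℂ) (coeff (fun l => conjIdx (Jv l))) = coeff Jv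
  bdd : ∃ M : ℝ, ∀ Jv, ‖coeff Jv‖ ≤ M

noncomputable def Poly.norm {d r : ℕ} (P : Poly d r) (R : ℝ) : ℝ :=
  (⨆ Jv : Fin r → Idx d, ‖P.coeff Jv‖) * R ^ r

noncomputable def Poly.eval {d r : ℕ} (P : Poly d r) (u : Seq d) : ℂ :=
  ∑' Jv : Fin r → Idx d, P.coeff Jv * ∏ l, u (Jv l)

noncomputable def Poly.pderiv {d r : ℕ} (P : Poly d r) (K : Idx d) (u : Seq d) : ℂ :=
  ∑' Jv : Fin r → Idx d, ∑ l : Fin r,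
    (if Jv l = K then P.coeff Jv * ∏ m ∈ Finset.univ.erase l, u (Jv m) else 0)

noncomputable def Poly.field {d r : ℕ} (P : Poly d r) (u : Seq d) : Seq d :=
  fun J => Complex.I * sgnC J.2 * P.pderiv (conjIdx J) u

noncomputable def freqSum {d r : ℕ} (ω : Zd d → ℝ) (Jv : Fin r → Idx d) : ℝ :=
  ∑ l, (sgn ((Jv l).2) : ℝ) * ω ((Jv l).1)

open scoped ENNReal

/-!
Write `a_J = |u_J|` and `w_J = (1 + |J|) ^ s`. On the support of `P` the momentum vanishes, so by
the triangle inequality the weight of each slot is controlled by the other ones: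
`w_{J_l} ≤ (r - 1) ^ s ∑_{m ≠ l} w_{J_m}`. Hence `w_K |∂_K P(u)|` is at most `sup |P_𝐉|` times a
sum of convolutions of `w a` with `r - 2` copies of `a`. By Young's inequality each of them has
`ℓ²`-norm at most `2 ‖u‖_s ‖a‖_{ℓ¹} ^ (r - 2)` (the factor `2` because `(j, σ) ↦ σ j` is
two-to-one), and `‖a‖_{ℓ¹}² ≤ (∑_J w_J⁻²) ‖u‖_s²` by Cauchy–Schwarz, where the sum is finite
because `2 s > d`. All sums are taken in `ℝ≥0∞`, so no summability has to be checked on the way.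
-/

theorem ENNReal.two_mul_le_add_sq (a b : ℝ≥0∞) : 2 * a * b ≤ a ^ 2 + b ^ 2 := by
  rcases eq_or_ne a ⊤ with rfl | ha
  · simp [ENNReal.top_pow]
  rcases eq_or_ne b ⊤ with rfl | hb
  · simp [ENNReal.top_pow]
  lift a to NNReal using ha
  lift b to NNReal using hb
  exact_mod_cast _root_.two_mul_le_add_sq a b

theorem ENNReal.sq_tsum_mul_le {ι : Type*} (f g : ι → ℝ≥0∞) :
    (∑' i, f i * g i) ^ 2 ≤ (∑' i, f i ^ 2 * g i) * ∑' i, g i := by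
  have double : ∀ F G : ι → ℝ≥0∞, (∑' i, F i) * ∑' j, G j = ∑' i, ∑' j, F i * G j := by
    intro F G
    simp_rw [ENNReal.tsum_mul_left, ENNReal.tsum_mul_right]
  refine (ENNReal.mul_le_mul_iff_right two_ne_zero ENNReal.ofNat_ne_top).1 ?_
  calc 2 * (∑' i, f i * g i) ^ 2
      = ∑' i, ∑' j, 2 * f i * f j * (g i * g j) := by
        rw [sq, double, ← ENNReal.tsum_mul_left]
        refine tsum_congr fun i => ?_
        rw [← ENNReal.tsum_mul_left]
        exact tsum_congr fun j => by ring
    _ ≤ ∑' i, ∑' j, (f i ^ 2 * g i * g j + f j ^ 2 * g j * g i) := by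
        gcongr with i j
        calc 2 * f i * f j * (g i * g j) ≤ (f i ^ 2 + f j ^ 2) * (g i * g j) := by
              gcongr; exact ENNReal.two_mul_le_add_sq _ _
          _ = _ := by ring
    _ = 2 * ((∑' i, f i ^ 2 * g i) * ∑' i, g i) := by
        rw [tsum_congr fun i => ENNReal.tsum_add, ENNReal.tsum_add, ← double,
          ENNReal.tsum_comm, ← double, two_mul]

theorem ENNReal.sq_sum_le_card_mul_sum_sq {ι : Type*} (s : Finset ι) (f : ι → ℝ≥0∞) :
    (∑ i ∈ s, f i) ^ 2 ≤ s.card * ∑ i ∈ s, f i ^ 2 := by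
  have h := ENNReal.sq_tsum_mul_le (fun i : s => f i) 1
  simp only [Pi.one_apply, mul_one, tsum_fintype, Finset.sum_const, Finset.card_univ,
    Fintype.card_coe, nsmul_one, Finset.sum_coe_sort s f,
    Finset.sum_coe_sort s fun i => f i ^ 2] at h
  rwa [mul_comm] at h

theorem ENNReal.sq_sum_sum_erase_le {ι : Type*} [Fintype ι] [DecidableEq ι]
    (x : ι → ι → ℝ≥0∞) :
    (∑ l, ∑ m ∈ Finset.univ.erase l, x l m) ^ 2
      ≤ ((Fintype.card ι * (Fintype.card ι - 1) : ℕ) : ℝ≥0∞)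
          * ∑ l, ∑ m ∈ Finset.univ.erase l, x l m ^ 2 := by
  calc (∑ l, ∑ m ∈ Finset.univ.erase l, x l m) ^ 2
      ≤ Fintype.card ι * ∑ l, (∑ m ∈ Finset.univ.erase l, x l m) ^ 2 :=
        ENNReal.sq_sum_le_card_mul_sum_sq _ _
    _ ≤ Fintype.card ι
          * ∑ l, ((Fintype.card ι - 1 : ℕ) * ∑ m ∈ Finset.univ.erase l, x l m ^ 2) := by
        gcongr with l
        have h := ENNReal.sq_sum_le_card_mul_sum_sq (Finset.univ.erase l) (x l)
        rwa [Finset.card_erase_of_mem (Finset.mem_univ l), Finset.card_univ] at h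
    _ = _ := by rw [← Finset.mul_sum, ← mul_assoc, Nat.cast_mul]

theorem ENNReal.tsum_pi_prod_eq_pow {ι X : Type*} [Fintype ι] (g : X → ℝ≥0∞) :
    ∑' T : ι → X, ∏ i, g (T i) = (∑' x, g x) ^ Fintype.card ι := by
  suffices h : ∀ n, ∑' T : Fin n → X, ∏ i, g (T i) = (∑' x, g x) ^ n by
    rw [← h, ← ((Fintype.equivFin ι).arrowCongr (Equiv.refl X)).symm.tsum_eq]
    refine tsum_congr fun T => ?_
    simp [Equiv.arrowCongr, ← (Fintype.equivFin ι).prod_comp]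
  intro n
  induction n with
  | zero => simp
  | succ n ih =>
    rw [← (Fin.consEquiv fun _ => X).tsum_eq, ENNReal.tsum_prod']
    simp [Fin.prod_univ_succ, ENNReal.tsum_mul_left, ENNReal.tsum_mul_right, ih, pow_succ']

theorem rpow_le_card_rpow_mul_sum_rpow {ι : Type*} {s : Finset ι} (hs : s.Nonempty)
    {a : ι → ℝ} (ha : ∀ i ∈ s, 0 ≤ a i) {b p : ℝ} (hb : 0 ≤ b) (hp : 0 ≤ p)
    (hba : b ≤ ∑ i ∈ s, a i) : b ^ p ≤ (s.card : ℝ) ^ p * ∑ i ∈ s, a i ^ p := by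
  obtain ⟨m, hm, hmax⟩ := s.exists_max_image a hs
  have hbm : b ≤ s.card * a m := by
    simpa using hba.trans (Finset.sum_le_sum hmax)
  calc b ^ p ≤ (s.card * a m) ^ p := by gcongr
    _ = (s.card : ℝ) ^ p * a m ^ p := Real.mul_rpow (by positivity) (ha m hm)
    _ ≤ (s.card : ℝ) ^ p * ∑ i ∈ s, a i ^ p := by
      gcongr
      exact Finset.single_le_sum (f := fun i => a i ^ p)
        (fun i hi => Real.rpow_nonneg (ha i hi) p) hm

theorem summable_one_add_abs_int_rpow_neg {q : ℝ} (hq : 1 < q) :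
    Summable fun n : ℤ => (1 + |(n : ℝ)|) ^ (-q) := by
  have h : Summable fun n : ℕ => (1 + (n : ℝ)) ^ (-q) := by
    have := (summable_nat_add_iff 1).2 (Real.summable_nat_rpow.2 (by linarith : -q < -1))
    simpa [add_comm] using this
  exact .of_nat_of_neg (by simpa using h) (by simpa using h)

theorem prod_erase_eq_mul_prod_compl_pair {ι M : Type*} [Fintype ι] [DecidableEq ι]
    [CommMonoid M] {l m : ι} (hml : m ≠ l) (f : ι → M) :
    ∏ i ∈ Finset.univ.erase l, f i = f m * ∏ i ∈ {l, m}ᶜ, f i := by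
  rw [← Finset.mul_prod_erase _ f (Finset.mem_erase.2 ⟨hml, Finset.mem_univ m⟩)]
  congr 2
  ext i
  simp [and_comm]

section FunSplitAt

variable {ι X : Type*} [DecidableEq ι]

theorem funSplitAt_symm_apply_self (p : ι) (x : X) (S : {i // i ≠ p} → X) :
    (Equiv.funSplitAt p X).symm (x, S) p = x := by
  simp [Equiv.funSplitAt]

theorem funSplitAt_symm_apply_coe {p : ι} (x : X) (S : {i // i ≠ p} → X) (j : {i // i ≠ p}) :
    (Equiv.funSplitAt p X).symm (x, S) j = S j := by
  simp [Equiv.funSplitAt, j.2]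

variable [Fintype ι]

theorem prod_erase_funSplitAt_symm {M : Type*} [CommMonoid M] (p : ι) (f : X → M) (x : X)
    (S : {i // i ≠ p} → X) :
    ∏ i ∈ Finset.univ.erase p, f ((Equiv.funSplitAt p X).symm (x, S) i) = ∏ j, f (S j) := by
  refine (Finset.prod_subtype (F := inferInstance) (p := (· ≠ p)) _ (by simp) _).trans ?_
  simp only [funSplitAt_symm_apply_coe]

theorem sum_funSplitAt_symm {M : Type*} [AddCommMonoid M] (p : ι) (f : X → M) (x : X)
    (S : {i // i ≠ p} → X) :
    ∑ i, f ((Equiv.funSplitAt p X).symm (x, S) i) = f x + ∑ j, f (S j) := by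
  rw [← Finset.add_sum_erase _ _ (Finset.mem_univ p), funSplitAt_symm_apply_self]
  congr 1
  refine (Finset.sum_subtype (F := inferInstance) (p := (· ≠ p)) _ (by simp) _).trans ?_
  simp only [funSplitAt_symm_apply_coe]

theorem ENNReal.tsum_mul_prod_erase_eq (p : ι) (g a : X → ℝ≥0∞) :
    ∑' T : ι → X, g (T p) * ∏ i ∈ Finset.univ.erase p, a (T i)
      = (∑' x, g x) * (∑' x, a x) ^ (Fintype.card ι - 1) := by
  rw [← (Equiv.funSplitAt p X).symm.tsum_eq, ENNReal.tsum_prod']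
  simp only [funSplitAt_symm_apply_self, prod_erase_funSplitAt_symm, ENNReal.tsum_mul_left,
    ENNReal.tsum_mul_right, ENNReal.tsum_pi_prod_eq_pow, Fintype.card_subtype_compl,
    Fintype.card_unique]

theorem prod_compl_pair_funSplitAt_symm {M : Type*} [CommMonoid M] {p q : ι} (hpq : p ≠ q)
    (f : X → M) (x : X) (S : {i // i ≠ q} → X) :
    ∏ i ∈ {p, q}ᶜ, f ((Equiv.funSplitAt q X).symm (x, S) i)
      = ∏ j ∈ Finset.univ.erase ⟨p, hpq⟩, f (S j) := by
  have hmap : ({p, q}ᶜ : Finset ι)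
      = (Finset.univ.erase (⟨p, hpq⟩ : {i // i ≠ q})).map (Function.Embedding.subtype _) := by
    ext i
    simp [and_comm]
  rw [hmap, Finset.prod_map]
  simp only [Function.Embedding.subtype_apply, funSplitAt_symm_apply_coe]

theorem ENNReal.tsum_constrained_mul_prod_le {G : Type*} [AddCommGroup G] [DecidableEq G]
    {μ : X → G} {M : ℝ≥0∞} (hμ : ∀ c, ∑' x, (if μ x = c then 1 else 0) ≤ M) {p q : ι} (hpq : p ≠ q)
    (c : G) (g a : X → ℝ≥0∞) :
    ∑' T : ι → X, (if ∑ i, μ (T i) = c then g (T p) * ∏ i ∈ {p, q}ᶜ, a (T i) else 0)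
      ≤ M * ((∑' x, g x) * (∑' x, a x) ^ (Fintype.card ι - 2)) := by
  set p' : {i // i ≠ q} := ⟨p, hpq⟩
  rw [← (Equiv.funSplitAt q X).symm.tsum_eq, ENNReal.tsum_prod', ENNReal.tsum_comm]
  calc ∑' S : {i // i ≠ q} → X, ∑' x, (if ∑ i, μ ((Equiv.funSplitAt q X).symm (x, S) i) = c then
          g ((Equiv.funSplitAt q X).symm (x, S) p)
            * ∏ i ∈ {p, q}ᶜ, a ((Equiv.funSplitAt q X).symm (x, S) i) else 0)
      = ∑' S : {i // i ≠ q} → X, (g (S p') * ∏ j ∈ Finset.univ.erase p', a (S j))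
          * ∑' x, (if μ x = c - ∑ j, μ (S j) then 1 else 0) := by
        refine tsum_congr fun S => ?_
        rw [← ENNReal.tsum_mul_left]
        refine tsum_congr fun x => ?_
        rw [sum_funSplitAt_symm, prod_compl_pair_funSplitAt_symm hpq,
          ← funSplitAt_symm_apply_coe x S p']
        simp only [eq_sub_iff_add_eq, mul_ite, mul_one, mul_zero]
        rfl
    _ ≤ ∑' S : {i // i ≠ q} → X, (g (S p') * ∏ j ∈ Finset.univ.erase p', a (S j)) * M := by
        gcongr with S
        exact hμ _
    _ = M * ((∑' x, g x) * (∑' x, a x) ^ (Fintype.card ι - 2)) := by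
        rw [ENNReal.tsum_mul_right, ENNReal.tsum_mul_prod_erase_eq, mul_comm,
          Fintype.card_subtype_compl, Fintype.card_subtype_eq, Nat.sub_sub]

end FunSplitAt

section Convolution

variable {ι X G : Type*} [Fintype ι] [DecidableEq ι] [DecidableEq X]
  [AddCommGroup G] [DecidableEq G]

-- `T` runs over the tuples with `∑ i, μ (T i) = c` and slot `l` pinned to `K`: this is the
-- convolution of `f` (in slot `m`) with the copies of `a` in the other slots, at `c - μ K`.
noncomputable def constrainedConv (μ : X → G) (c : G) (l m : ι) (f a : X → ℝ≥0∞) (K : X) : ℝ≥0∞ :=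
  ∑' T : ι → X, if ∑ i, μ (T i) = c ∧ T l = K then f (T m) * ∏ i ∈ {l, m}ᶜ, a (T i) else 0

-- Young's inequality `‖f ⋆ a ⋆ ⋯ ⋆ a‖₂ ≤ M ‖f‖₂ ‖a‖₁ ^ (n - 2)`, by Cauchy–Schwarz in each fibre
-- `T l = K`: once all other slots are chosen, the constraint leaves at most `M` values for one.
theorem tsum_constrainedConv_sq_le {μ : X → G} {M : ℝ≥0∞}
    (hμ : ∀ c, ∑' x, (if μ x = c then 1 else 0) ≤ M) {l m : ι} (hlm : l ≠ m) (c : G)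
    (f a : X → ℝ≥0∞) :
    ∑' K, constrainedConv μ c l m f a K ^ 2
      ≤ M ^ 2 * (∑' x, f x ^ 2) * ((∑' x, a x) ^ (Fintype.card ι - 2)) ^ 2 := by
  set L := (∑' x, a x) ^ (Fintype.card ι - 2)
  set Q : (ι → X) → ℝ≥0∞ := fun T => ∏ i ∈ {l, m}ᶜ, a (T i)
  have hQ : ∀ K, ∑' T : ι → X, (if ∑ i, μ (T i) = c ∧ T l = K then Q T else 0) ≤ M * L := by
    intro K
    calc ∑' T : ι → X, (if ∑ i, μ (T i) = c ∧ T l = K then Q T else 0)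
        = ∑' T : ι → X, (if ∑ i, μ (T i) = c then (if T l = K then 1 else 0) * Q T else 0) := by
          simp only [ite_and, ite_mul, one_mul, zero_mul]
      _ ≤ M * ((∑' x : X, if x = K then 1 else 0) * L) :=
          ENNReal.tsum_constrained_mul_prod_le hμ hlm c _ a
      _ = M * L := by rw [tsum_ite_eq, one_mul]
  have hfQ : ∑' K, ∑' T : ι → X,
      (if ∑ i, μ (T i) = c ∧ T l = K then f (T m) ^ 2 * Q T else 0) ≤ M * ((∑' x, f x ^ 2) * L) :=
    calc ∑' K, ∑' T : ι → X, (if ∑ i, μ (T i) = c ∧ T l = K then f (T m) ^ 2 * Q T else 0)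
        = ∑' T : ι → X,
            (if ∑ i, μ (T i) = c then f (T m) ^ 2 * ∏ i ∈ {m, l}ᶜ, a (T i) else 0) := by
          rw [ENNReal.tsum_comm]
          refine tsum_congr fun T => ?_
          simp only [ite_and, Q, Finset.pair_comm l m]
          split_ifs <;> simp
      _ ≤ M * ((∑' x, f x ^ 2) * L) := ENNReal.tsum_constrained_mul_prod_le hμ hlm.symm c _ a
  calc ∑' K, constrainedConv μ c l m f a K ^ 2
      ≤ ∑' K, (∑' T : ι → X, (if ∑ i, μ (T i) = c ∧ T l = K then f (T m) ^ 2 * Q T else 0))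
          * (M * L) := by
        gcongr with K
        refine ((ENNReal.sq_tsum_mul_le (fun T => f (T m))
          fun T => if ∑ i, μ (T i) = c ∧ T l = K then Q T else 0).trans_eq' ?_).trans ?_
        · simp only [constrainedConv, mul_ite, mul_zero, Q]
        · simp only [mul_ite, mul_zero]
          gcongr
          exact hQ K
      _ ≤ M * ((∑' x, f x ^ 2) * L) * (M * L) := by
        rw [ENNReal.tsum_mul_right]
        gcongr
      _ = M ^ 2 * (∑' x, f x ^ 2) * L ^ 2 := by ring

end Convolution

def toEuclidean (d : ℕ) : Zd d →+ EuclideanSpace ℝ (Fin d) where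
  toFun j := WithLp.toLp 2 fun i => (j i : ℝ)
  map_zero' := by ext; simp
  map_add' j k := by ext; simp

theorem enorm_eq_norm_toEuclidean {d : ℕ} (j : Zd d) : enorm j = ‖toEuclidean d j‖ := by
  simp [enorm, EuclideanSpace.norm_eq, toEuclidean]

theorem abs_le_enorm {d : ℕ} (j : Zd d) (i : Fin d) : |(j i : ℝ)| ≤ enorm j := by
  simpa [enorm_eq_norm_toEuclidean, toEuclidean] using PiLp.norm_apply_le (toEuclidean d j) i

theorem enorm_sgn_smul {d : ℕ} (b : Bool) (j : Zd d) : enorm (sgn b • j) = enorm j := by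
  cases b <;> simp [enorm_eq_norm_toEuclidean, sgn]

theorem enorm_nonneg {d : ℕ} (j : Zd d) : 0 ≤ enorm j := Real.sqrt_nonneg _

theorem inorm_nonneg {d : ℕ} (J : Idx d) : 0 ≤ inorm J := enorm_nonneg _

def signedIdx {d : ℕ} (J : Idx d) : Zd d := sgn J.2 • J.1

theorem enorm_signedIdx {d : ℕ} (J : Idx d) : enorm (signedIdx J) = inorm J :=
  enorm_sgn_smul J.2 J.1

theorem one_add_inorm_le_sum_erase {d : ℕ} {ι : Type*} [Fintype ι] [DecidableEq ι]
    {Jv : ι → Idx d} (hJv : ∑ i, signedIdx (Jv i) = 0) {l : ι}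
    (hl : (Finset.univ.erase l).Nonempty) :
    1 + inorm (Jv l) ≤ ∑ i ∈ Finset.univ.erase l, (1 + inorm (Jv i)) := by
  have hsplit : signedIdx (Jv l) = -∑ i ∈ Finset.univ.erase l, signedIdx (Jv i) := by
    rw [eq_neg_iff_add_eq_zero, Finset.add_sum_erase _ (fun i => signedIdx (Jv i))
      (Finset.mem_univ l), hJv]
  have hnorm : inorm (Jv l) ≤ ∑ i ∈ Finset.univ.erase l, inorm (Jv i) := by
    rw [← enorm_signedIdx, hsplit, enorm_eq_norm_toEuclidean, map_neg, norm_neg, map_sum]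
    refine (norm_sum_le _ _).trans_eq ?_
    simp only [← enorm_eq_norm_toEuclidean, enorm_signedIdx]
  rw [Finset.sum_add_distrib, Finset.sum_const, nsmul_one]
  gcongr
  exact_mod_cast Finset.card_pos.2 hl

theorem one_add_enorm_rpow_neg_le_prod {d : ℕ} {t q : ℝ} (hq : 0 ≤ q) (hdq : d * q ≤ t)
    (j : Zd d) : (1 + enorm j) ^ (-t) ≤ ∏ i, (1 + |(j i : ℝ)|) ^ (-q) := by
  have h1 : 1 ≤ 1 + enorm j := le_add_of_nonneg_right (enorm_nonneg j)
  have hprod : ∏ i, (1 + |(j i : ℝ)|) ≤ (1 + enorm j) ^ d :=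
    calc ∏ i, (1 + |(j i : ℝ)|) ≤ ∏ _i : Fin d, (1 + enorm j) :=
          Finset.prod_le_prod (fun i _ => by positivity) fun i _ => by linarith [abs_le_enorm j i]
      _ = (1 + enorm j) ^ d := by simp
  rw [Real.finsetProd_rpow _ _ (fun i _ => by positivity), Real.rpow_neg (by positivity),
    Real.rpow_neg (by positivity)]
  refine inv_anti₀ (by positivity) ?_
  calc (∏ i, (1 + |(j i : ℝ)|)) ^ q ≤ ((1 + enorm j) ^ d) ^ q := by gcongr
    _ = (1 + enorm j) ^ (d * q) := by rw [← Real.rpow_natCast, ← Real.rpow_mul (by linarith)]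
    _ ≤ (1 + enorm j) ^ t := Real.rpow_le_rpow_of_exponent_le h1 hdq

section Weights

variable {d : ℕ}

noncomputable def weight (s : ℝ) (J : Idx d) : ℝ≥0∞ := ENNReal.ofReal ((1 + inorm J) ^ s)

theorem one_add_inorm_pos (J : Idx d) : 0 < 1 + inorm J := by linarith [inorm_nonneg J]

theorem weight_ne_zero (s : ℝ) (J : Idx d) : weight s J ≠ 0 := by
  simpa [weight] using Real.rpow_pos_of_pos (one_add_inorm_pos J) s

theorem weight_ne_top (s : ℝ) (J : Idx d) : weight s J ≠ ⊤ := ENNReal.ofReal_ne_top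

theorem inv_weight_sq (s : ℝ) (J : Idx d) :
    (weight s J ^ 2)⁻¹ = ENNReal.ofReal ((1 + inorm J) ^ (-(2 * s))) := by
  have h := one_add_inorm_pos J
  rw [weight, ← ENNReal.ofReal_pow (by positivity), ← ENNReal.ofReal_inv_of_pos (by positivity),
    ← Real.rpow_natCast, ← Real.rpow_mul h.le, Real.rpow_neg h.le]
  norm_num [mul_comm]

theorem weight_mul_enorm_sq (s : ℝ) (J : Idx d) (z : ℂ) :
    (weight s J * ‖z‖ₑ) ^ 2 = ENNReal.ofReal ((1 + inorm J) ^ (2 * s) * ‖z‖ ^ 2) := by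
  have h := one_add_inorm_pos J
  rw [weight, ← ofReal_norm, ← ENNReal.ofReal_mul (by positivity),
    ← ENNReal.ofReal_pow (by positivity), mul_pow, ← Real.rpow_natCast, ← Real.rpow_mul h.le]
  norm_num [mul_comm]

theorem sobNormSq_summand_nonneg (s : ℝ) (J : Idx d) (z : ℂ) :
    0 ≤ (1 + inorm J) ^ (2 * s) * ‖z‖ ^ 2 :=
  mul_nonneg (Real.rpow_nonneg (one_add_inorm_pos J).le _) (sq_nonneg _)

theorem tsum_one_add_enorm_rpow_neg_lt_top {t : ℝ} (ht : d < t) :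
    ∑' j : Zd d, ENNReal.ofReal ((1 + enorm j) ^ (-t)) < ⊤ := by
  -- any `q > 1` with `d * q ≤ t` will do
  set q : ℝ := 1 + (t - d) / (d + 1)
  have hq : 1 < q := by
    have : 0 < (t - d) / (d + 1) := by apply div_pos <;> linarith
    linarith
  have hdq : d * q ≤ t := by
    have : (d : ℝ) * ((t - d) / (d + 1)) ≤ t - d := by
      rw [mul_div_assoc', div_le_iff₀ (by positivity)]
      nlinarith
    linarith
  calc ∑' j : Zd d, ENNReal.ofReal ((1 + enorm j) ^ (-t))
      ≤ ∑' j : Zd d, ∏ i, ENNReal.ofReal ((1 + |(j i : ℝ)|) ^ (-q)) := by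
        gcongr with j
        rw [← ENNReal.ofReal_prod_of_nonneg fun i _ => by positivity]
        exact ENNReal.ofReal_le_ofReal (one_add_enorm_rpow_neg_le_prod (by linarith) hdq j)
    _ = (∑' n : ℤ, ENNReal.ofReal ((1 + |(n : ℝ)|) ^ (-q))) ^ d := by
        simpa using ENNReal.tsum_pi_prod_eq_pow (ι := Fin d)
          fun n : ℤ => ENNReal.ofReal ((1 + |(n : ℝ)|) ^ (-q))
    _ < ⊤ := by
        rw [← ENNReal.ofReal_tsum_of_nonneg (fun n => by positivity)
          (summable_one_add_abs_int_rpow_neg hq)]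
        exact ENNReal.pow_lt_top ENNReal.ofReal_lt_top

theorem tsum_inv_weight_sq_lt_top {s : ℝ} (hs : d < 2 * s) :
    ∑' J : Idx d, (weight s J ^ 2)⁻¹ < ⊤ := by
  have h := tsum_one_add_enorm_rpow_neg_lt_top hs
  simp only [inv_weight_sq, ENNReal.tsum_prod', tsum_bool, inorm, ENNReal.tsum_add]
  exact ENNReal.add_lt_top.2 ⟨h, h⟩

theorem sq_tsum_le_tsum_inv_weight_sq_mul (s : ℝ) (a : Idx d → ℝ≥0∞) :
    (∑' J, a J) ^ 2 ≤ (∑' J : Idx d, (weight s J ^ 2)⁻¹) * ∑' J, (weight s J * a J) ^ 2 := by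
  have hw : ∀ J : Idx d, weight s J ^ 2 * (weight s J ^ 2)⁻¹ = 1 := fun J =>
    ENNReal.mul_inv_cancel (pow_ne_zero 2 (weight_ne_zero s J))
      (ENNReal.pow_ne_top (weight_ne_top s J))
  have := ENNReal.sq_tsum_mul_le (fun J => weight s J ^ 2 * a J) fun J => (weight s J ^ 2)⁻¹
  calc (∑' J, a J) ^ 2
      = (∑' J, weight s J ^ 2 * a J * (weight s J ^ 2)⁻¹) ^ 2 := by
        congr 1
        refine tsum_congr fun J => ?_
        rw [mul_right_comm, hw, one_mul]
    _ ≤ (∑' J, (weight s J ^ 2 * a J) ^ 2 * (weight s J ^ 2)⁻¹) * ∑' J, (weight s J ^ 2)⁻¹ :=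
        this
    _ = (∑' J, (weight s J ^ 2)⁻¹) * ∑' J, (weight s J * a J) ^ 2 := by
        rw [mul_comm]
        congr 1
        refine tsum_congr fun J => ?_
        calc (weight s J ^ 2 * a J) ^ 2 * (weight s J ^ 2)⁻¹
            = (weight s J * a J) ^ 2 * (weight s J ^ 2 * (weight s J ^ 2)⁻¹) := by ring
          _ = (weight s J * a J) ^ 2 := by rw [hw, mul_one]

end Weights

section SobolevNorm

variable {d : ℕ} {s : ℝ}

noncomputable def esobNormSq (d : ℕ) (s : ℝ) (u : Seq d) : ℝ≥0∞ :=
  ∑' J, (weight s J * ‖u J‖ₑ) ^ 2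

-- Both sides are `0` when the series diverges.
theorem sobNormSq_eq_toReal (u : Seq d) : sobNormSq d s u = (esobNormSq d s u).toReal := by
  rw [esobNormSq, ENNReal.tsum_toReal_eq fun J => by simp [weight_mul_enorm_sq]]
  simp only [weight_mul_enorm_sq]
  exact tsum_congr fun J => (ENNReal.toReal_ofReal (sobNormSq_summand_nonneg s J _)).symm

theorem esobNormSq_eq_ofReal {u : Seq d} (hu : MemSob d s u) :
    esobNormSq d s u = ENNReal.ofReal (sobNormSq d s u) := by
  rw [sobNormSq, ENNReal.ofReal_tsum_of_nonneg (fun J => sobNormSq_summand_nonneg s J _) hu]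
  exact tsum_congr fun J => weight_mul_enorm_sq s J (u J)

theorem memSob_of_esobNormSq_ne_top {u : Seq d} (h : esobNormSq d s u ≠ ⊤) : MemSob d s u := by
  refine (ENNReal.summable_toReal h).congr fun J => ?_
  rw [weight_mul_enorm_sq, ENNReal.toReal_ofReal (sobNormSq_summand_nonneg s J _)]

theorem esobNormSq_le_of_sobNorm_le {u : Seq d} (hu : MemSob d s u) {R : ℝ}
    (h : sobNorm d s u ≤ R) : esobNormSq d s u ≤ ENNReal.ofReal R ^ 2 := by
  have hR : 0 ≤ R := (Real.sqrt_nonneg _).trans h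
  rw [esobNormSq_eq_ofReal hu, ← ENNReal.ofReal_pow hR]
  exact ENNReal.ofReal_le_ofReal ((Real.sqrt_le_left hR).1 h)

theorem memSob_and_sobNorm_le_of_esobNormSq_le {v : Seq d} {A : ℝ} (hA : 0 ≤ A)
    (h : esobNormSq d s v ≤ ENNReal.ofReal A ^ 2) : MemSob d s v ∧ sobNorm d s v ≤ A := by
  have hA2 : ENNReal.ofReal A ^ 2 ≠ ⊤ := ENNReal.pow_ne_top ENNReal.ofReal_ne_top
  refine ⟨memSob_of_esobNormSq_ne_top (ne_top_of_le_ne_top hA2 h), ?_⟩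
  rw [sobNorm, sobNormSq_eq_toReal, Real.sqrt_le_left hA]
  simpa [ENNReal.toReal_ofReal hA] using ENNReal.toReal_mono hA2 h

end SobolevNorm

section VectorField

variable {d r : ℕ} {s : ℝ}

theorem Poly.norm_coeff_le_iSup (P : Poly d r) (Jv : Fin r → Idx d) :
    ‖P.coeff Jv‖ ≤ ⨆ Jv, ‖P.coeff Jv‖ := by
  obtain ⟨M, hM⟩ := P.bdd
  exact le_ciSup ⟨M, Set.forall_mem_range.2 hM⟩ Jv

theorem tsum_ite_signedIdx_eq_two (c : Zd d) :
    ∑' J : Idx d, (if signedIdx J = c then (1 : ℝ≥0∞) else 0) = 2 := by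
  rw [ENNReal.tsum_prod']
  calc ∑' (j : Zd d) (b : Bool), (if signedIdx (j, b) = c then (1 : ℝ≥0∞) else 0)
      = ∑' j : Zd d, ((if j = -c then 1 else 0) + if j = c then 1 else 0) := by
        refine tsum_congr fun j => ?_
        rw [tsum_bool]
        simp [signedIdx, sgn, neg_eq_iff_eq_neg]
    _ = 2 := by
        rw [ENNReal.tsum_add, tsum_ite_eq, tsum_ite_eq, one_add_one_eq_two]

theorem weight_le_of_sum_signedIdx_eq_zero {ι : Type*} [Fintype ι] [DecidableEq ι] (hs : 0 ≤ s)
    {Jv : ι → Idx d} (hJv : ∑ i, signedIdx (Jv i) = 0) {l : ι}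
    (hl : (Finset.univ.erase l).Nonempty) :
    weight s (Jv l)
      ≤ ENNReal.ofReal (((Fintype.card ι - 1 : ℕ) : ℝ) ^ s)
          * ∑ i ∈ Finset.univ.erase l, weight s (Jv i) := by
  have h := rpow_le_card_rpow_mul_sum_rpow hl (fun i _ => (one_add_inorm_pos (Jv i)).le)
    (one_add_inorm_pos (Jv l)).le hs (one_add_inorm_le_sum_erase hJv hl)
  rw [Finset.card_erase_of_mem (Finset.mem_univ l), Finset.card_univ] at h
  simp only [weight]
  rw [← ENNReal.ofReal_sum_of_nonneg fun i _ => Real.rpow_nonneg (one_add_inorm_pos _).le _,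
    ← ENNReal.ofReal_mul (by positivity)]
  exact ENNReal.ofReal_le_ofReal h

theorem enorm_pderiv_summand_le (P : Poly d r) {B : ℝ} (hB : ∀ Jv, ‖P.coeff Jv‖ ≤ B)
    (u : Seq d) (K : Idx d) (Jv : Fin r → Idx d) (l : Fin r) :
    ‖if Jv l = K then P.coeff Jv * ∏ m ∈ Finset.univ.erase l, u (Jv m) else 0‖ₑ
      ≤ if ∑ i, signedIdx (Jv i) = 0 ∧ Jv l = K then
          ENNReal.ofReal B * ∏ m ∈ Finset.univ.erase l, ‖u (Jv m)‖ₑ else 0 := by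
  by_cases hK : Jv l = K
  · by_cases h0 : P.coeff Jv = 0
    · simp [h0]
    · rw [if_pos hK, if_pos ⟨P.mom Jv h0, hK⟩, enorm_mul, ← ofReal_norm (P.coeff Jv)]
      gcongr
      · exact hB Jv
      · simp [enorm_eq_nnnorm, nnnorm_prod]
  · simp [hK]

theorem weight_mul_ite_le_sum (hr : 2 ≤ r) (hs : 0 ≤ s) (K : Idx d) (Jv : Fin r → Idx d)
    (l : Fin r) (b : ℝ≥0∞) (a : Idx d → ℝ≥0∞) :
    weight s K * (if ∑ i, signedIdx (Jv i) = 0 ∧ Jv l = K then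
        b * ∏ m ∈ Finset.univ.erase l, a (Jv m) else 0)
      ≤ b * ENNReal.ofReal (((r - 1 : ℕ) : ℝ) ^ s) * ∑ m ∈ Finset.univ.erase l,
          if ∑ i, signedIdx (Jv i) = 0 ∧ Jv l = K then
            weight s (Jv m) * a (Jv m) * ∏ i ∈ {l, m}ᶜ, a (Jv i) else 0 := by
  split_ifs with h
  · obtain ⟨hJv, rfl⟩ := h
    have hl : (Finset.univ.erase l).Nonempty := by
      rw [← Finset.card_pos, Finset.card_erase_of_mem (Finset.mem_univ l), Finset.card_fin]
      omega
    have hw := weight_le_of_sum_signedIdx_eq_zero hs hJv hl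
    rw [Fintype.card_fin] at hw
    calc weight s (Jv l) * (b * ∏ m ∈ Finset.univ.erase l, a (Jv m))
        ≤ ENNReal.ofReal (((r - 1 : ℕ) : ℝ) ^ s) * (∑ m ∈ Finset.univ.erase l, weight s (Jv m))
            * (b * ∏ m ∈ Finset.univ.erase l, a (Jv m)) := by gcongr
      _ = _ := by
        rw [Finset.mul_sum, Finset.sum_mul, Finset.mul_sum]
        refine Finset.sum_congr rfl fun m hm => ?_
        rw [prod_erase_eq_mul_prod_compl_pair (Finset.ne_of_mem_erase hm)]
        ring
  · simp

theorem weight_mul_enorm_pderiv_le (hr : 2 ≤ r) (hs : 0 ≤ s) (P : Poly d r) {B : ℝ}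
    (hB : ∀ Jv, ‖P.coeff Jv‖ ≤ B) (u : Seq d) (K : Idx d) :
    weight s K * ‖P.pderiv K u‖ₑ
      ≤ ENNReal.ofReal B * ENNReal.ofReal (((r - 1 : ℕ) : ℝ) ^ s)
          * ∑ l : Fin r, ∑ m ∈ Finset.univ.erase l,
            constrainedConv signedIdx 0 l m (fun J => weight s J * ‖u J‖ₑ) (fun J => ‖u J‖ₑ) K := by
  -- `enorm_tsum_le_tsum_enorm` also holds for the junk value `0` of a divergent `tsum`.
  calc weight s K * ‖P.pderiv K u‖ₑ
      ≤ weight s K * ∑' Jv : Fin r → Idx d, ∑ l, if ∑ i, signedIdx (Jv i) = 0 ∧ Jv l = K then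
          ENNReal.ofReal B * ∏ m ∈ Finset.univ.erase l, ‖u (Jv m)‖ₑ else 0 := by
        gcongr
        refine enorm_tsum_le_tsum_enorm.trans (ENNReal.tsum_le_tsum fun Jv => ?_)
        exact (enorm_sum_le _ _).trans (Finset.sum_le_sum fun l _ =>
          enorm_pderiv_summand_le P hB u K Jv l)
    _ ≤ ∑' Jv : Fin r → Idx d, ∑ l, ENNReal.ofReal B * ENNReal.ofReal (((r - 1 : ℕ) : ℝ) ^ s)
          * ∑ m ∈ Finset.univ.erase l, if ∑ i, signedIdx (Jv i) = 0 ∧ Jv l = K then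
            weight s (Jv m) * ‖u (Jv m)‖ₑ * ∏ i ∈ {l, m}ᶜ, ‖u (Jv i)‖ₑ else 0 := by
        rw [← ENNReal.tsum_mul_left]
        refine ENNReal.tsum_le_tsum fun Jv => ?_
        rw [Finset.mul_sum]
        exact Finset.sum_le_sum fun l _ =>
          weight_mul_ite_le_sum hr hs K Jv l (ENNReal.ofReal B) fun J => ‖u J‖ₑ
    _ = _ := by
        rw [Summable.tsum_finsetSum fun _ _ => ENNReal.summable, Finset.mul_sum]
        refine Finset.sum_congr rfl fun l _ => ?_
        rw [ENNReal.tsum_mul_left, Summable.tsum_finsetSum fun _ _ => ENNReal.summable]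
        rfl

theorem enorm_sgnC (b : Bool) : ‖sgnC b‖ₑ = 1 := by
  cases b <;> simp [sgnC]

theorem esobNormSq_field_eq (P : Poly d r) (u : Seq d) :
    esobNormSq d s (P.field u) = ∑' K, (weight s K * ‖P.pderiv K u‖ₑ) ^ 2 := by
  have hconj : Function.Involutive (conjIdx (d := d)) := fun J => by simp [conjIdx]
  rw [esobNormSq, ← (hconj.toPerm _).tsum_eq]
  refine tsum_congr fun J => ?_
  have hI : ‖Complex.I‖ₑ = 1 := by simp [enorm_eq_nnnorm]
  simp [Poly.field, hI, enorm_sgnC, weight, inorm, conjIdx]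

noncomputable def fieldBoundConst (d r : ℕ) (s : ℝ) : ℝ≥0∞ :=
  4 * ((r * (r - 1) : ℕ) : ℝ≥0∞) ^ 2 * ENNReal.ofReal (((r - 1 : ℕ) : ℝ) ^ s) ^ 2
    * (∑' J : Idx d, (weight s J ^ 2)⁻¹) ^ (r - 2)

theorem esobNormSq_field_le (hr : 2 ≤ r) (hs : 0 ≤ s) (P : Poly d r) {B : ℝ}
    (hB : ∀ Jv, ‖P.coeff Jv‖ ≤ B) (u : Seq d) :
    esobNormSq d s (P.field u)
      ≤ ENNReal.ofReal B ^ 2 * fieldBoundConst d r s * esobNormSq d s u ^ (r - 1) := by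
  set a : Idx d → ℝ≥0∞ := fun J => ‖u J‖ₑ
  set N := esobNormSq d s u
  set κ := ∑' J : Idx d, (weight s J ^ 2)⁻¹
  set c := ENNReal.ofReal B * ENNReal.ofReal (((r - 1 : ℕ) : ℝ) ^ s) with hc
  set G := fun (l m : Fin r) K => constrainedConv signedIdx 0 l m (fun J => weight s J * a J) a K
  have hG : ∀ l, ∀ m ∈ Finset.univ.erase l, ∑' K, G l m K ^ 2 ≤ 4 * N * (κ * N) ^ (r - 2) := by
    intro l m hm
    calc ∑' K, G l m K ^ 2
        ≤ 2 ^ 2 * N * ((∑' J, a J) ^ (Fintype.card (Fin r) - 2)) ^ 2 :=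
          tsum_constrainedConv_sq_le (fun c => (tsum_ite_signedIdx_eq_two c).le)
            (Finset.ne_of_mem_erase hm).symm 0 _ a
      _ ≤ 4 * N * (κ * N) ^ (r - 2) := by
          rw [Fintype.card_fin, ← pow_mul, mul_comm _ 2, pow_mul]
          norm_num only
          gcongr
          exact sq_tsum_le_tsum_inv_weight_sq_mul s a
  have hN : N ^ (r - 1) = N * N ^ (r - 2) := by
    rw [← pow_succ']
    congr 1
    omega
  calc esobNormSq d s (P.field u)
      = ∑' K, (weight s K * ‖P.pderiv K u‖ₑ) ^ 2 := esobNormSq_field_eq P u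
    _ ≤ ∑' K, (c * ∑ l, ∑ m ∈ Finset.univ.erase l, G l m K) ^ 2 :=
        ENNReal.tsum_le_tsum fun K =>
          pow_le_pow_left' (weight_mul_enorm_pderiv_le hr hs P hB u K) 2
    _ ≤ ∑' K, c ^ 2 * (((r * (r - 1) : ℕ) : ℝ≥0∞)
          * ∑ l, ∑ m ∈ Finset.univ.erase l, G l m K ^ 2) := by
        gcongr with K
        rw [mul_pow]
        gcongr
        simpa using ENNReal.sq_sum_sum_erase_le fun l m => G l m K
    _ = c ^ 2 * ((r * (r - 1) : ℕ) : ℝ≥0∞)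
          * ∑ l, ∑ m ∈ Finset.univ.erase l, ∑' K, G l m K ^ 2 := by
        simp only [ENNReal.tsum_mul_left, mul_assoc]
        rw [Summable.tsum_finsetSum fun _ _ => ENNReal.summable]
        simp only [Summable.tsum_finsetSum fun _ _ => ENNReal.summable]
    _ ≤ c ^ 2 * ((r * (r - 1) : ℕ) : ℝ≥0∞)
          * ∑ l : Fin r, ∑ m ∈ Finset.univ.erase l, 4 * N * (κ * N) ^ (r - 2) := by
        gcongr with l _ m hm
        exact hG l m hm
    _ = ENNReal.ofReal B ^ 2 * fieldBoundConst d r s * N ^ (r - 1) := by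
        simp only [Finset.sum_const, Finset.card_erase_of_mem (Finset.mem_univ _),
          Finset.card_univ, Fintype.card_fin, nsmul_eq_mul, Nat.cast_mul]
        rw [hN, fieldBoundConst, mul_pow κ N, hc, Nat.cast_mul]
        ring

theorem fieldBoundConst_ne_top (hs : d < 2 * s) : fieldBoundConst d r s ≠ ⊤ := by
  have := (tsum_inv_weight_sq_lt_top hs).ne
  simp [fieldBoundConst, ENNReal.mul_eq_top, ENNReal.pow_eq_top_iff, this]

theorem fieldBoundConst_ne_zero (hr : 2 ≤ r) : fieldBoundConst d r s ≠ 0 := by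
  have hκ : ∑' J : Idx d, (weight s J ^ 2)⁻¹ ≠ 0 := fun h =>
    ENNReal.inv_ne_zero.2 (ENNReal.pow_ne_top (weight_ne_top s (0, true)))
      (ENNReal.tsum_eq_zero.1 h (0, true))
  have hr1 : (0 : ℝ) < ((r - 1 : ℕ) : ℝ) := by exact_mod_cast (by omega : 0 < r - 1)
  refine mul_ne_zero (mul_ne_zero (mul_ne_zero four_ne_zero (pow_ne_zero _ ?_))
    (pow_ne_zero _ ?_)) (pow_ne_zero _ hκ)
  · exact_mod_cast (Nat.mul_pos (by omega) (by omega)).ne'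
  · exact (ENNReal.ofReal_pos.2 (Real.rpow_pos_of_pos hr1 s)).ne'

theorem esobNormSq_field_le_of_sobNorm_le (hr : 2 ≤ r) (hs : d < 2 * s) (P : Poly d r)
    {u : Seq d} (hu : MemSob d s u) {R : ℝ} (huR : sobNorm d s u ≤ R) :
    esobNormSq d s (P.field u) ≤ ENNReal.ofReal
      ((⨆ Jv, ‖P.coeff Jv‖) * Real.sqrt (fieldBoundConst d r s).toReal * R ^ (r - 1)) ^ 2 := by
  have hs0 : 0 ≤ s := by linarith [(Nat.cast_nonneg d : (0 : ℝ) ≤ d)]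
  have hR : 0 ≤ R := (Real.sqrt_nonneg _).trans huR
  have hB : 0 ≤ ⨆ Jv, ‖P.coeff Jv‖ := Real.iSup_nonneg fun _ => norm_nonneg _
  calc esobNormSq d s (P.field u)
      ≤ ENNReal.ofReal (⨆ Jv, ‖P.coeff Jv‖) ^ 2 * fieldBoundConst d r s
          * esobNormSq d s u ^ (r - 1) :=
        esobNormSq_field_le hr hs0 P P.norm_coeff_le_iSup u
    _ ≤ ENNReal.ofReal (⨆ Jv, ‖P.coeff Jv‖) ^ 2 * fieldBoundConst d r s
          * (ENNReal.ofReal R ^ 2) ^ (r - 1) := by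
        gcongr
        exact esobNormSq_le_of_sobNorm_le hu huR
    _ = _ := by
        rw [ENNReal.ofReal_mul (by positivity), ENNReal.ofReal_mul hB, ENNReal.ofReal_pow hR,
          mul_pow, mul_pow, ← ENNReal.ofReal_pow (Real.sqrt_nonneg _) 2,
          Real.sq_sqrt ENNReal.toReal_nonneg, ENNReal.ofReal_toReal (fieldBoundConst_ne_top hs)]
        ring

end VectorField

theorem stmt_2_general (d : ℕ) (r : ℕ) (hr : 3 ≤ r) (R : ℝ)
    (s s₀ : ℝ) (hs₀ : (d : ℝ) / 2 < s₀) (hs : s₀ < s) :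
    ∃ C : ℝ, 0 < C ∧ ∀ P : Poly d r, ∀ u : Seq d, MemSob d s u → sobNorm d s u < R →
      MemSob d s (P.field u) ∧ sobNorm d s (P.field u) ≤ C * (P.norm R) / R := by
  have h2s : (d : ℝ) < 2 * s := by linarith
  have hA : 0 < (fieldBoundConst d r s).toReal :=
    ENNReal.toReal_pos (fieldBoundConst_ne_zero (by omega)) (fieldBoundConst_ne_top h2s)
  refine ⟨Real.sqrt (fieldBoundConst d r s).toReal, Real.sqrt_pos.2 hA, fun P u hu huR => ?_⟩
  have hR : 0 < R := (Real.sqrt_nonneg _).trans_lt huR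
  have hB : 0 ≤ ⨆ Jv, ‖P.coeff Jv‖ := Real.iSup_nonneg fun _ => norm_nonneg _
  obtain ⟨hmem, hle⟩ := memSob_and_sobNorm_le_of_esobNormSq_le (by positivity)
    (esobNormSq_field_le_of_sobNorm_le (by omega) h2s P hu huR.le)
  have hRr : R ^ r = R ^ (r - 1) * R := by rw [← pow_succ, Nat.sub_add_cancel (by omega)]
  refine ⟨hmem, hle.trans_eq ?_⟩
  rw [Poly.norm, hRr]
  field_simp

/-- Lemma "Estimates on the vector field".
Fix `r ≥ 3` and `R > 0`. For any `s > s₀ > d/2` there is `C > 0` such that for every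
`P ∈ 𝒫_r` and every `u` with `‖u‖_s < R` one has `‖X_P(u)‖_s ≤ C ‖P‖_R / R`. -/
theorem stmt_2 (d : ℕ) (hd : 1 ≤ d) (r : ℕ) (hr : 3 ≤ r) (R : ℝ) (hR : 0 < R)
    (s s₀ : ℝ) (hs₀ : (d : ℝ) / 2 < s₀) (hs : s₀ < s) :
    ∃ C : ℝ, 0 < C ∧ ∀ P : Poly d r, ∀ u : Seq d, MemSob d s u → sobNorm d s u < R →
      MemSob d s (P.field u) ∧ sobNorm d s (P.field u) ≤ C * (P.norm R) / R :=
  stmt_2_general d r hr R s s₀ hs₀ hs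

end AG
end

section
/- Let r̄ ≥ 3, let G ∈ 𝒫_{r₁,r₂} and F ∈ 𝒫_{r₃,r₄} with r₁, r₂, r₃, r₄ ≤ r̄ and 3 ≤ r₁ ≤ r₂, and let n̄ ∈ ℕ be the smallest integer such that (n̄+1)(r₁−2) + r₂ > r̄. Then there exists a constant C_{r̄} > 0 such that for every k ≤ n̄ and every R > 0 one has ‖(Ad_G)^k F‖_R ≤ (C_{r̄} · ‖G‖_R / R²)^k · ‖F‖_R, where Ad_G F := {F;G} and (Ad_G)^k denotes the k-fold iterate. -/
open scoped BigOperators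

namespace AG

/-- A polynomial with homogeneous components of each degree, finitely many nonzero
(used to encode the classes `𝒫_{r₁,r₂}`). -/
structure GPoly (d : ℕ) where
  part : ∀ r : ℕ, Poly d r
  finiteDegrees : {r : ℕ | ∃ Jv, (part r).coeff Jv ≠ 0}.Finite

/-- `G ∈ 𝒫_{a,b}`: all homogeneous components of degree `< a` or `> b` vanish. -/
def GPoly.InRange {d : ℕ} (G : GPoly d) (a b : ℕ) : Prop :=
  ∀ r : ℕ, (r < a ∨ b < r) → ∀ Jv, (G.part r).coeff Jv = 0

noncomputable def GPoly.norm {d : ℕ} (G : GPoly d) (R : ℝ) : ℝ :=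
  ∑' r : ℕ, (G.part r).norm R

noncomputable def GPoly.eval {d : ℕ} (G : GPoly d) (u : Seq d) : ℂ :=
  ∑' r : ℕ, (G.part r).eval u

noncomputable def GPoly.pderiv {d : ℕ} (G : GPoly d) (K : Idx d) (u : Seq d) : ℂ :=
  ∑' r : ℕ, (G.part r).pderiv K u

/-- Hamiltonian vector field of `G`: `(X_G)_{(j,σ)}(u) = iσ ∂G/∂u_{(j,−σ)}(u)`. -/
noncomputable def GPoly.field {d : ℕ} (G : GPoly d) (u : Seq d) : Seq d :=
  fun J => Complex.I * sgnC J.2 * G.pderiv (conjIdx J) u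

/-- `u : ℝ → ℓ²_s` solves `u' = X(u)` on `T`, the derivative being taken in `ℓ²_s`. -/
def SolvesFlow (d : ℕ) (s : ℝ) (X : Seq d → Seq d) (u : ℝ → Seq d) (T : Set ℝ) : Prop :=
  (∀ t ∈ T, MemSob d s (u t)) ∧
  ∀ t₀ ∈ T, Filter.Tendsto
    (fun t => sobNorm d s (fun J => u t J - u t₀ J - (t - t₀) * X (u t₀) J) / |t - t₀|)
    (nhdsWithin t₀ (T \ {t₀})) (nhds 0)

/-- `Q` represents the Poisson bracket `Ad_G F = {F;G}`: the associated functions agree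
(on finitely supported sequences, where all the sums are genuinely convergent). -/
def IsBracket {d : ℕ} (Q F G : GPoly d) : Prop :=
  ∀ u : Seq d, (Function.support u).Finite →
    Q.eval u = Complex.I * ∑' j : Zd d,
      (F.pderiv (j, false) u * G.pderiv (j, true) u
        - F.pderiv (j, true) u * G.pderiv (j, false) u)

/-!
Testing the bracket identity on finitely supported sequences `u = ∑ᵢ cᵢ e_{Nᵢ}` turns it into
an identity of polynomials in the amplitudes `c`. The coefficient of `c₁ ⋯ cₙ` is `n! Q_N` on
one side and, on the other, a sum over splittings of `{1, …, n}` of products of coefficients of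
`∂F` and `∂G`. Momentum conservation collapses the sum over the contracted mode `j ∈ ℤ^d` to a
single term, so every coefficient of `{F;G}` of degree `n` is bounded by a constant depending
only on `n` times sup-norms of the factors; summing over degrees (a Cauchy product) gives
`‖{F;G}‖_R R² ≤ C ‖F‖_R ‖G‖_R`. A bracket with `G` raises the degree by at most `r₂`, so for
`k ≤ n̄ ≤ r̄` all degrees involved are bounded in terms of `r̄` and the estimate iterates.
-/

open MvPolynomial Finset
open scoped Nat

lemma card_antidiagonal_le {α : Type*} [DecidableEq α] (f : α →₀ ℕ) :
    #(antidiagonal f) ≤ 2 ^ f.degree := by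
  calc #(antidiagonal f) ≤ Multiset.card ((Finsupp.toMultiset f).antidiagonal.map
        (Prod.map Multiset.toFinsupp Multiset.toFinsupp)) := Multiset.toFinset_card_le _
    _ = 2 ^ f.degree := by
      rw [Multiset.card_map, Multiset.card_antidiagonal, Finsupp.card_toMultiset]; rfl

lemma norm_sum_le_of_eq_zero_of_ne {ι E : Type*} [SeminormedAddCommGroup E] {s : Finset ι}
    {f : ι → E} (i₀ : ι) (hf : ∀ i ∈ s, i ≠ i₀ → f i = 0) {B : ℝ} (hB : ‖f i₀‖ ≤ B) :
    ‖∑ i ∈ s, f i‖ ≤ B := by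
  by_cases hi₀ : i₀ ∈ s
  · rwa [sum_eq_single_of_mem i₀ hi₀ hf]
  · rw [sum_eq_zero fun i hi => hf i hi (ne_of_mem_of_not_mem hi hi₀), norm_zero]
    exact (norm_nonneg _).trans hB

lemma add_one_mul_pow_le {k n : ℕ} (hk : k ≤ n) : ((k : ℝ) + 1) * n ^ k ≤ (n + 1) ^ (k + 1) := by
  rw [pow_succ']
  have hk' : (k : ℝ) ≤ n := by exact_mod_cast hk
  gcongr
  linarith

lemma prod_erase_zero {M : Type*} [CommMonoid M] {p : ℕ} (f : Fin (p + 1) → M) :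
    ∏ m ∈ univ.erase 0, f m = ∏ i : Fin p, f i.succ := by
  rw [Fin.univ_succ, erase_cons, prod_map]
  rfl

section Multidegree

variable {ι σ : Type*} [Fintype ι]

noncomputable def multideg (g : ι → σ) : σ →₀ ℕ := ∑ l, Finsupp.single (g l) 1

lemma multideg_apply [DecidableEq σ] (g : ι → σ) (i : σ) : multideg g i = #{l | g l = i} := by
  simp [multideg, Finsupp.finsetSum_apply, Finsupp.single_apply]

lemma degree_multideg (g : ι → σ) : (multideg g).degree = Fintype.card ι := by
  simp [multideg, map_sum, Finsupp.degree_single]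

lemma sum_multideg_smul [Fintype σ] {M : Type*} [AddCommMonoid M] (g : ι → σ) (v : σ → M) :
    ∑ i, multideg g i • v i = ∑ l, v (g l) := by
  classical
  simp only [multideg_apply, card_eq_sum_ones, sum_smul, sum_filter]
  rw [sum_comm]
  simp

lemma prod_X_comp {R : Type*} [CommSemiring R] (g : ι → σ) :
    ∏ l, (X (g l) : MvPolynomial σ R) = monomial (multideg g) 1 := by
  simp only [multideg, monomial_sum_one, X]

lemma multideg_id_apply [Fintype σ] (i : σ) : multideg (id : σ → σ) i = 1 := by
  classical
  rw [multideg_apply, card_eq_one]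
  exact ⟨i, by ext; simp⟩

lemma multideg_eq_multideg_id_iff [Fintype σ] (g : σ → σ) :
    multideg g = multideg id ↔ Function.Bijective g := by
  classical
  simp only [Finsupp.ext_iff, multideg_id_apply]
  simp only [multideg_apply, Function.bijective_iff_existsUnique,
    Fintype.existsUnique_iff_card_one]

end Multidegree

section TestSequence

variable {d n : ℕ}

noncomputable def finSeq (N : Fin n → Idx d) (c : Fin n → ℂ) : Seq d :=
  fun J => ∑ i, if J = N i then c i else 0

lemma finSeq_eq_zero {N : Fin n → Idx d} {J : Idx d} (hJ : J ∉ Set.range N) (c : Fin n → ℂ) :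
    finSeq N c J = 0 :=
  sum_eq_zero fun i _ => if_neg fun h => hJ ⟨i, h.symm⟩

lemma finite_support_finSeq (N : Fin n → Idx d) (c : Fin n → ℂ) :
    (Function.support (finSeq N c)).Finite :=
  (Set.finite_range N).subset fun _ hJ => by_contra fun h => hJ (finSeq_eq_zero h c)

noncomputable def restrictPoly {m : ℕ} (h : (Fin m → Idx d) → ℂ) (N : Fin n → Idx d) :
    MvPolynomial (Fin n) ℂ :=
  ∑ g : Fin m → Fin n, C (h (N ∘ g)) * ∏ l, X (g l)

lemma eval_restrictPoly {m : ℕ} (h : (Fin m → Idx d) → ℂ) (N : Fin n → Idx d) (c : Fin n → ℂ) :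
    eval c (restrictPoly h N) = ∑ g : Fin m → Fin n, h (N ∘ g) * ∏ l, c (g l) := by
  simp [restrictPoly]

lemma coeff_restrictPoly {m : ℕ} (h : (Fin m → Idx d) → ℂ) (N : Fin n → Idx d)
    (a : Fin n →₀ ℕ) :
    coeff a (restrictPoly h N) = ∑ g : Fin m → Fin n, if multideg g = a then h (N ∘ g) else 0 := by
  simp [restrictPoly, coeff_sum, prod_X_comp, coeff_C_mul, coeff_monomial]

lemma tsum_mul_prod_finSeq {m : ℕ} (h : (Fin m → Idx d) → ℂ) (N : Fin n → Idx d)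
    (c : Fin n → ℂ) :
    ∑' K : Fin m → Idx d, h K * ∏ l, finSeq N c (K l) = eval c (restrictPoly h N) := by
  have hexpand : ∀ K : Fin m → Idx d, h K * ∏ l, finSeq N c (K l)
      = ∑ g : Fin m → Fin n, if K = N ∘ g then h (N ∘ g) * ∏ l, c (g l) else 0 := by
    intro K
    simp only [finSeq, prod_univ_sum, Fintype.piFinset_univ, prod_ite_zero, mul_sum]
    refine sum_congr rfl fun g _ => ?_
    by_cases hK : K = N ∘ g
    · subst hK; simp
    · rw [if_neg hK, if_neg fun h' => hK (funext fun i => h' i (mem_univ i)), mul_zero]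
  rw [tsum_congr hexpand, Summable.tsum_finsetSum fun g _ => (hasSum_ite_eq _ _).summable,
    eval_restrictPoly]
  simp

noncomputable def Poly.pderivTerm {r : ℕ} (P : Poly d r) (K : Idx d) (u : Seq d) (l : Fin r)
    (Kv : Fin r → Idx d) : ℂ :=
  if Kv l = K then P.coeff Kv * ∏ m ∈ univ.erase l, u (Kv m) else 0

lemma Poly.summable_pderivTerm {r : ℕ} (P : Poly d r) (K : Idx d) {u : Seq d}
    (hu : (Function.support u).Finite) (l : Fin r) : Summable (P.pderivTerm K u l) := by
  classical
  refine summable_of_ne_finset_zero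
    (s := Fintype.piFinset fun _ => insert K hu.toFinset) fun Kv hKv => ?_
  obtain ⟨m, hmK, hmu⟩ : ∃ m, Kv m ≠ K ∧ u (Kv m) = 0 := by
    simpa [Fintype.mem_piFinset] using hKv
  rw [Poly.pderivTerm]
  split_ifs with hl
  · have hml : m ≠ l := by rintro rfl; exact hmK hl
    exact mul_eq_zero_of_right _ (prod_eq_zero (mem_erase.2 ⟨hml, mem_univ m⟩) hmu)
  · rfl

/-- By the symmetry of the coefficients, every slot `l` contributes the same sum. -/
lemma Poly.tsum_pderivTerm {p : ℕ} (P : Poly d (p + 1)) (K : Idx d) (u : Seq d)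
    (l : Fin (p + 1)) :
    ∑' Kv, P.pderivTerm K u l Kv = ∑' A : Fin p → Idx d, P.coeff (Fin.cons K A) * ∏ i, u (A i) := by
  set g : (Fin p → Idx d) → Fin (p + 1) → Idx d := fun A => Fin.cons K A ∘ Equiv.swap 0 l
  have hg : Function.Injective g := (Equiv.swap 0 l).surjective.injective_comp_right.comp
    (Fin.cons_right_injective (α := fun _ => Idx d) K)
  have hrange : Function.support (P.pderivTerm K u l) ⊆ Set.range g := by
    intro Kv hKv
    have hl : Kv l = K := by by_contra h; exact hKv (if_neg h)
    refine ⟨Fin.tail (Kv ∘ Equiv.swap 0 l), ?_⟩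
    have hcons : Fin.cons K (Fin.tail (Kv ∘ Equiv.swap 0 l)) = Kv ∘ Equiv.swap 0 l := by
      conv_rhs => rw [← Fin.cons_self_tail (Kv ∘ Equiv.swap 0 l)]
      simp [hl]
    funext x
    simp [g, hcons]
  rw [← hg.tsum_eq hrange]
  refine tsum_congr fun A => ?_
  have hprod : ∏ m ∈ univ.erase l, u (g A m)
      = ∏ m ∈ univ.erase 0, u ((Fin.cons K A : Fin (p + 1) → Idx d) m) :=
    prod_equiv (Equiv.swap 0 l) (by simp [Equiv.swap_apply_eq_iff]) (by simp [g])
  have hgl : g A l = K := by simp [g]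
  have hcoeff : P.coeff (g A) = P.coeff (Fin.cons K A) := P.symm _ _
  simp only [Poly.pderivTerm, hgl, if_true, hcoeff, hprod, prod_erase_zero, Fin.cons_succ]

lemma Poly.pderiv_eq_of_finite {p : ℕ} (P : Poly d (p + 1)) (K : Idx d) {u : Seq d}
    (hu : (Function.support u).Finite) :
    P.pderiv K u = (p + 1) * ∑' A : Fin p → Idx d, P.coeff (Fin.cons K A) * ∏ i, u (A i) := by
  change ∑' Kv, ∑ l, P.pderivTerm K u l Kv = _
  rw [Summable.tsum_finsetSum fun l _ => P.summable_pderivTerm K hu l]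
  simp [P.tsum_pderivTerm]

end TestSequence

section Momentum

variable {d n : ℕ}

noncomputable def weightedMomentum (N : Fin n → Idx d) (a : Fin n →₀ ℕ) : Zd d :=
  ∑ i, a i • sgn (N i).2 • (N i).1

lemma momentum_comp {m : ℕ} (N : Fin n → Idx d) (g : Fin m → Fin n) :
    momentum (N ∘ g) = weightedMomentum N (multideg g) := by
  rw [weightedMomentum, sum_multideg_smul]
  rfl

lemma momentum_cons {r : ℕ} (K : Idx d) (A : Fin r → Idx d) :
    momentum (Fin.cons K A : Fin (r + 1) → Idx d) = sgn K.2 • K.1 + momentum A := by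
  simp [momentum, Fin.sum_univ_succ]

lemma sgn_smul_sgn_smul (b : Bool) (j : Zd d) : sgn b • sgn b • j = j := by
  cases b <;> simp [sgn]

end Momentum

section Restriction

variable {d n : ℕ}

noncomputable def Poly.restrictDeriv : {r : ℕ} → Poly d r → (Fin n → Idx d) → Idx d →
    MvPolynomial (Fin n) ℂ
  | 0, _, _, _ => 0
  | p + 1, P, N, K => (p + 1 : ℂ) • restrictPoly (fun A => P.coeff (Fin.cons K A)) N

lemma Poly.pderiv_finSeq {r : ℕ} (P : Poly d r) (K : Idx d) (N : Fin n → Idx d)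
    (c : Fin n → ℂ) : P.pderiv K (finSeq N c) = MvPolynomial.eval c (P.restrictDeriv N K) := by
  cases r with
  | zero => simp [Poly.pderiv, Poly.restrictDeriv]
  | succ p =>
    rw [P.pderiv_eq_of_finite K (finite_support_finSeq N c), tsum_mul_prod_finSeq]
    simp [Poly.restrictDeriv, smul_eval]

lemma Poly.coeff_restrictDeriv {p : ℕ} (P : Poly d (p + 1)) (N : Fin n → Idx d) (K : Idx d)
    (a : Fin n →₀ ℕ) :
    MvPolynomial.coeff a (P.restrictDeriv N K) = (p + 1) * ∑ g : Fin p → Fin n,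
      if multideg g = a then P.coeff (Fin.cons K (N ∘ g)) else 0 := by
  simp [Poly.restrictDeriv, coeff_restrictPoly]

lemma Poly.eq_of_coeff_restrictDeriv_ne_zero {r : ℕ} (P : Poly d r) {N : Fin n → Idx d}
    {j : Zd d} {σ : Bool} {a : Fin n →₀ ℕ}
    (h : MvPolynomial.coeff a (P.restrictDeriv N (j, σ)) ≠ 0) :
    a.degree + 1 = r ∧ j = -(sgn σ • weightedMomentum N a) := by
  cases r with
  | zero => simp [Poly.restrictDeriv] at h
  | succ p =>
    rw [P.coeff_restrictDeriv] at h
    obtain ⟨g, -, hg⟩ := exists_ne_zero_of_sum_ne_zero (right_ne_zero_of_mul h)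
    have hga : multideg g = a := by by_contra hga; exact hg (if_neg hga)
    rw [if_pos hga] at hg
    have hmom := P.mom _ hg
    rw [momentum_cons, momentum_comp, hga] at hmom
    refine ⟨by simp [← hga, degree_multideg], ?_⟩
    rw [← sgn_smul_sgn_smul σ j, eq_neg_of_add_eq_zero_left hmom, smul_neg]

end Restriction

namespace GPoly

variable {d n : ℕ}

noncomputable def degrees (P : GPoly d) : Finset ℕ := P.finiteDegrees.toFinset

lemma coeff_eq_zero_of_notMem_degrees (P : GPoly d) {r : ℕ} (hr : r ∉ P.degrees)
    (Jv : Fin r → Idx d) : (P.part r).coeff Jv = 0 := by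
  by_contra h
  exact hr (P.finiteDegrees.mem_toFinset.2 ⟨Jv, h⟩)

noncomputable def restrict (P : GPoly d) (N : Fin n → Idx d) : MvPolynomial (Fin n) ℂ :=
  ∑ r ∈ P.degrees, restrictPoly (P.part r).coeff N

noncomputable def restrictDeriv (P : GPoly d) (N : Fin n → Idx d) (K : Idx d) :
    MvPolynomial (Fin n) ℂ :=
  ∑ r ∈ P.degrees, (P.part r).restrictDeriv N K

lemma eval_finSeq (P : GPoly d) (N : Fin n → Idx d) (c : Fin n → ℂ) :
    P.eval (finSeq N c) = MvPolynomial.eval c (P.restrict N) := by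
  rw [GPoly.eval, tsum_eq_sum fun r hr => ?_, restrict, map_sum]
  · exact sum_congr rfl fun r _ => tsum_mul_prod_finSeq _ N c
  · simp [Poly.eval, P.coeff_eq_zero_of_notMem_degrees hr]

lemma pderiv_finSeq (P : GPoly d) (K : Idx d) (N : Fin n → Idx d) (c : Fin n → ℂ) :
    P.pderiv K (finSeq N c) = MvPolynomial.eval c (P.restrictDeriv N K) := by
  rw [GPoly.pderiv, tsum_eq_sum fun r hr => ?_, restrictDeriv, map_sum]
  · exact sum_congr rfl fun r _ => Poly.pderiv_finSeq _ K N c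
  · simp [Poly.pderiv, P.coeff_eq_zero_of_notMem_degrees hr]

lemma coeff_restrictDeriv_eq_zero (P : GPoly d) {N : Fin n → Idx d} {j : Zd d} {σ : Bool}
    {a : Fin n →₀ ℕ} (hj : j ≠ -(sgn σ • weightedMomentum N a)) :
    MvPolynomial.coeff a (P.restrictDeriv N (j, σ)) = 0 := by
  rw [restrictDeriv, coeff_sum]
  refine sum_eq_zero fun r _ => ?_
  by_contra h
  exact hj ((P.part r).eq_of_coeff_restrictDeriv_ne_zero h).2

lemma finite_setOf_restrictDeriv_ne_zero (P : GPoly d) (N : Fin n → Idx d) (σ : Bool) :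
    {j | P.restrictDeriv N (j, σ) ≠ 0}.Finite := by
  refine (P.degrees.finite_toSet.biUnion fun r _ =>
    ((Finsupp.finite_of_degree_le r).subset fun a (ha : a.degree + 1 = r) => by
      simp only [Set.mem_ofPred_eq]; omega).image
      fun a => -(sgn σ • weightedMomentum N a)).subset fun j hj => ?_
  obtain ⟨a, ha⟩ := ne_zero_iff.1 hj
  rw [restrictDeriv, coeff_sum] at ha
  obtain ⟨r, hr, hra⟩ := exists_ne_zero_of_sum_ne_zero ha
  obtain ⟨hdeg, hj⟩ := (P.part r).eq_of_coeff_restrictDeriv_ne_zero hra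
  exact Set.mem_biUnion hr ⟨a, hdeg, hj.symm⟩

lemma InRange.mono {P : GPoly d} {a b a' b' : ℕ} (h : P.InRange a b) (ha : a' ≤ a)
    (hb : b ≤ b') : P.InRange a' b' :=
  fun r hr => h r (by omega)

end GPoly

section Bracket

variable {d n : ℕ}

noncomputable def bracketTerm (P G : GPoly d) (N : Fin n → Idx d) (j : Zd d) :
    MvPolynomial (Fin n) ℂ :=
  P.restrictDeriv N (j, false) * G.restrictDeriv N (j, true)
    - P.restrictDeriv N (j, true) * G.restrictDeriv N (j, false)

lemma eval_bracketTerm (P G : GPoly d) (N : Fin n → Idx d) (c : Fin n → ℂ) (j : Zd d) :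
    eval c (bracketTerm P G N j)
      = P.pderiv (j, false) (finSeq N c) * G.pderiv (j, true) (finSeq N c)
        - P.pderiv (j, true) (finSeq N c) * G.pderiv (j, false) (finSeq N c) := by
  simp [bracketTerm, GPoly.pderiv_finSeq]

lemma finite_support_bracketTerm (P G : GPoly d) (N : Fin n → Idx d) :
    (Function.support (bracketTerm P G N)).Finite := by
  refine ((P.finite_setOf_restrictDeriv_ne_zero N false).union
    (P.finite_setOf_restrictDeriv_ne_zero N true)).subset fun j hj => ?_
  by_contra h
  simp only [Set.mem_union, Set.mem_ofPred, not_or, not_not] at h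
  exact hj (by simp [bracketTerm, h.1, h.2])

/-- The bracket relation tested on `finSeq N c`, as an identity of polynomials in `c`. -/
lemma restrict_eq_of_isBracket {Q P G : GPoly d} (hQ : IsBracket Q P G) (N : Fin n → Idx d) :
    Q.restrict N = C Complex.I *
      ∑ j ∈ (finite_support_bracketTerm P G N).toFinset, bracketTerm P G N j := by
  refine MvPolynomial.funext fun c => ?_
  rw [← GPoly.eval_finSeq, hQ _ (finite_support_finSeq N c), map_mul, eval_C, map_sum]
  simp only [← eval_bracketTerm]
  rw [tsum_eq_sum fun j hj => ?_]
  simp_all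

lemma card_filter_bijective (n : ℕ) : #{g : Fin n → Fin n | Function.Bijective g} = n ! := by
  rw [← Fintype.card_subtype, Fintype.card_congr Equiv.bijectiveEquiv, Fintype.card_perm,
    Fintype.card_fin]

lemma coeff_restrictPoly_eq_zero {m : ℕ} (h : (Fin m → Idx d) → ℂ) (N : Fin n → Idx d)
    (hmn : m ≠ n) : coeff (multideg id) (restrictPoly h N) = 0 := by
  refine (coeff_restrictPoly h N _).trans (sum_eq_zero fun g _ => if_neg fun hg => hmn ?_)
  simpa [degree_multideg] using congrArg Finsupp.degree hg

lemma Poly.coeff_restrictPoly_multideg_id (P : Poly d n) (N : Fin n → Idx d) :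
    MvPolynomial.coeff (multideg id) (restrictPoly P.coeff N) = n ! * P.coeff N := by
  rw [coeff_restrictPoly]
  have hterm : ∀ g : Fin n → Fin n, (if multideg g = multideg id then P.coeff (N ∘ g) else 0)
      = if Function.Bijective g then P.coeff N else 0 := by
    intro g
    simp only [multideg_eq_multideg_id_iff]
    split_ifs with hg
    · exact P.symm (Equiv.ofBijective g hg) N
    · rfl
  simp only [hterm, sum_ite, sum_const_zero, add_zero, sum_const, card_filter_bijective,
    nsmul_eq_mul]

lemma GPoly.coeff_restrict (Q : GPoly d) (N : Fin n → Idx d) :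
    MvPolynomial.coeff (multideg id) (Q.restrict N) = n ! * (Q.part n).coeff N := by
  rw [GPoly.restrict, coeff_sum, sum_eq_single n (fun r _ hr => coeff_restrictPoly_eq_zero _ N hr)
    fun hn => by simp [(Q.part n).coeff_restrictPoly_multideg_id,
      Q.coeff_eq_zero_of_notMem_degrees hn]]
  exact (Q.part n).coeff_restrictPoly_multideg_id N

end Bracket

section Estimates

variable {d n : ℕ}

noncomputable def Poly.coeffSup {r : ℕ} (P : Poly d r) : ℝ := ⨆ Jv, ‖P.coeff Jv‖

lemma Poly.norm_coeff_le_coeffSup {r : ℕ} (P : Poly d r) (Jv : Fin r → Idx d) :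
    ‖P.coeff Jv‖ ≤ P.coeffSup := by
  obtain ⟨M, hM⟩ := P.bdd
  exact le_ciSup ⟨M, Set.forall_mem_range.2 hM⟩ Jv

lemma Poly.coeffSup_nonneg {r : ℕ} (P : Poly d r) : 0 ≤ P.coeffSup :=
  (norm_nonneg _).trans (P.norm_coeff_le_coeffSup fun _ => (0, true))

lemma Poly.coeffSup_eq_zero {r : ℕ} {P : Poly d r} (h : ∀ Jv, P.coeff Jv = 0) :
    P.coeffSup = 0 := by
  simp [Poly.coeffSup, h]

lemma Poly.norm_eq_coeffSup_mul {r : ℕ} (P : Poly d r) (R : ℝ) :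
    P.norm R = P.coeffSup * R ^ r := rfl

lemma Poly.norm_nonneg {r : ℕ} (P : Poly d r) {R : ℝ} (hR : 0 ≤ R) : 0 ≤ P.norm R :=
  mul_nonneg P.coeffSup_nonneg (pow_nonneg hR r)

lemma Poly.norm_coeff_restrictDeriv_le {p : ℕ} (P : Poly d (p + 1)) (N : Fin n → Idx d)
    (K : Idx d) (a : Fin n →₀ ℕ) :
    ‖MvPolynomial.coeff a (P.restrictDeriv N K)‖ ≤ (p + 1) * n ^ p * P.coeffSup := by
  rw [P.coeff_restrictDeriv, norm_mul, mul_assoc]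
  gcongr
  · norm_cast
  · calc _ ≤ ∑ g : Fin p → Fin n, P.coeffSup := norm_sum_le_of_le _ fun g _ => by
          split_ifs
          · exact P.norm_coeff_le_coeffSup _
          · simpa using P.coeffSup_nonneg
      _ = n ^ p * P.coeffSup := by simp

noncomputable def GPoly.derivCoeffBound (P : GPoly d) (a : Fin n →₀ ℕ) : ℝ :=
  (a.degree + 1) * n ^ a.degree * (P.part (a.degree + 1)).coeffSup

lemma GPoly.norm_coeff_restrictDeriv_le (P : GPoly d) (N : Fin n → Idx d) (K : Idx d)
    (a : Fin n →₀ ℕ) : ‖coeff a (P.restrictDeriv N K)‖ ≤ P.derivCoeffBound a := by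
  rw [GPoly.restrictDeriv, coeff_sum]
  refine norm_sum_le_of_eq_zero_of_ne (a.degree + 1) (fun r _ hr => ?_) ?_
  · by_contra h
    exact hr ((P.part r).eq_of_coeff_restrictDeriv_ne_zero h).1.symm
  · exact (P.part (a.degree + 1)).norm_coeff_restrictDeriv_le N K a

/-- By momentum conservation only `j = -(sgn σ • weightedMomentum N a)` contributes. -/
lemma norm_sum_coeff_mul_coeff_le (P G : GPoly d) (N : Fin n → Idx d) (T : Finset (Zd d))
    (σ σ' : Bool) (a b : Fin n →₀ ℕ) :
    ‖∑ j ∈ T, coeff a (P.restrictDeriv N (j, σ)) * coeff b (G.restrictDeriv N (j, σ'))‖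
      ≤ P.derivCoeffBound a * G.derivCoeffBound b := by
  refine norm_sum_le_of_eq_zero_of_ne (-(sgn σ • weightedMomentum N a))
    (fun j _ hj => by rw [P.coeff_restrictDeriv_eq_zero hj, zero_mul]) ?_
  rw [norm_mul]
  exact mul_le_mul (P.norm_coeff_restrictDeriv_le N _ a) (G.norm_coeff_restrictDeriv_le N _ b)
    (norm_nonneg _) ((norm_nonneg _).trans (P.norm_coeff_restrictDeriv_le N (0, σ) a))

lemma norm_coeff_le_of_isBracket {Q P G : GPoly d} (hQ : IsBracket Q P G)
    (N : Fin n → Idx d) :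
    ‖(Q.part n).coeff N‖ ≤ ∑ x ∈ antidiagonal (multideg (id : Fin n → Fin n)),
      2 * (P.derivCoeffBound x.1 * G.derivCoeffBound x.2) := by
  set T := (finite_support_bracketTerm P G N).toFinset
  set S : Bool → Bool → (Fin n →₀ ℕ) → (Fin n →₀ ℕ) → ℂ := fun σ σ' a b =>
    ∑ j ∈ T, coeff a (P.restrictDeriv N (j, σ)) * coeff b (G.restrictDeriv N (j, σ'))
  have hcoeff : (n ! : ℂ) * (Q.part n).coeff N = Complex.I *
      ∑ x ∈ antidiagonal (multideg id), (S false true x.1 x.2 - S true false x.1 x.2) := by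
    rw [← Q.coeff_restrict, restrict_eq_of_isBracket hQ, coeff_C_mul, coeff_sum]
    simp only [bracketTerm, coeff_sub, coeff_mul, ← sum_sub_distrib, S]
    rw [sum_comm]
  calc ‖(Q.part n).coeff N‖ ≤ ‖(n ! : ℂ) * (Q.part n).coeff N‖ := by
        rw [norm_mul, Complex.norm_natCast]
        exact le_mul_of_one_le_left (norm_nonneg _) (by exact_mod_cast n.factorial_pos)
    _ ≤ ∑ x ∈ antidiagonal (multideg id), (‖S false true x.1 x.2‖ + ‖S true false x.1 x.2‖) := by
        rw [hcoeff, norm_mul, Complex.norm_I, one_mul]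
        exact norm_sum_le_of_le _ fun x _ => norm_sub_le _ _
    _ ≤ _ := sum_le_sum fun x _ => by
        rw [two_mul]
        exact add_le_add (norm_sum_coeff_mul_coeff_le P G N T _ _ _ _)
          (norm_sum_coeff_mul_coeff_le P G N T _ _ _ _)

lemma degree_add_degree_of_mem_antidiagonal {x : (Fin n →₀ ℕ) × (Fin n →₀ ℕ)}
    (hx : x ∈ antidiagonal (multideg (id : Fin n → Fin n))) : x.1.degree + x.2.degree = n := by
  rw [← map_add, mem_antidiagonal.1 hx, degree_multideg, Fintype.card_fin]

lemma inRange_of_isBracket {Q P G : GPoly d} (hQ : IsBracket Q P G) {D₁ D₂ : ℕ}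
    (hP : P.InRange 0 D₁) (hG : G.InRange 0 D₂) : Q.InRange 0 (D₁ + D₂ - 2) := by
  intro r hr N
  refine norm_le_zero_iff.1 ((norm_coeff_le_of_isBracket hQ N).trans_eq
    (sum_eq_zero fun x hx => ?_))
  have hdeg := degree_add_degree_of_mem_antidiagonal hx
  by_cases h : x.1.degree + 1 ≤ D₁
  · simp [GPoly.derivCoeffBound, Poly.coeffSup_eq_zero (hG (x.2.degree + 1) (Or.inr (by omega)))]
  · simp [GPoly.derivCoeffBound, Poly.coeffSup_eq_zero (hP (x.1.degree + 1) (Or.inr (by omega)))]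

noncomputable def bracketConst (n : ℕ) : ℝ := 2 ^ (n + 1) * (n + 1) ^ (n + 2)

lemma bracketConst_pos (n : ℕ) : 0 < bracketConst n := by
  unfold bracketConst; positivity

lemma bracketConst_mono : Monotone bracketConst := by
  intro m n hmn
  unfold bracketConst
  have hmn' : (m : ℝ) ≤ n := by exact_mod_cast hmn
  have hpow : ((m : ℝ) + 1) ^ (m + 2) ≤ (n + 1) ^ (n + 2) :=
    calc ((m : ℝ) + 1) ^ (m + 2) ≤ (n + 1) ^ (m + 2) := by gcongr
      _ ≤ (n + 1) ^ (n + 2) := pow_le_pow_right₀ (by linarith) (by omega)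
  exact mul_le_mul (pow_le_pow_right₀ (by norm_num) (by omega)) hpow (by positivity)
    (by positivity)

lemma derivCoeffBound_mul_le {P G : GPoly d} {R : ℝ} (hR : 0 ≤ R)
    {x : (Fin n →₀ ℕ) × (Fin n →₀ ℕ)} (hx : x ∈ antidiagonal (multideg (id : Fin n → Fin n))) :
    P.derivCoeffBound x.1 * G.derivCoeffBound x.2 * R ^ (n + 2)
      ≤ (n + 1) ^ (n + 2)
        * ((P.part (x.1.degree + 1)).norm R * (G.part (x.2.degree + 1)).norm R) := by
  have hdeg := degree_add_degree_of_mem_antidiagonal hx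
  calc P.derivCoeffBound x.1 * G.derivCoeffBound x.2 * R ^ (n + 2)
      = ((x.1.degree : ℝ) + 1) * n ^ x.1.degree * (((x.2.degree : ℝ) + 1) * n ^ x.2.degree)
        * ((P.part (x.1.degree + 1)).norm R * (G.part (x.2.degree + 1)).norm R) := by
        simp only [GPoly.derivCoeffBound, Poly.norm_eq_coeffSup_mul, ← hdeg]
        ring
    _ ≤ (n + 1) ^ (x.1.degree + 1) * (n + 1) ^ (x.2.degree + 1)
        * ((P.part (x.1.degree + 1)).norm R * (G.part (x.2.degree + 1)).norm R) := by
        gcongr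
        · exact mul_nonneg ((P.part _).norm_nonneg hR) ((G.part _).norm_nonneg hR)
        · exact add_one_mul_pow_le (by omega)
        · exact add_one_mul_pow_le (by omega)
    _ = (n + 1) ^ (n + 2)
        * ((P.part (x.1.degree + 1)).norm R * (G.part (x.2.degree + 1)).norm R) := by
        rw [← pow_add, show x.1.degree + 1 + (x.2.degree + 1) = n + 2 by omega]

lemma norm_part_mul_sq_le_of_isBracket {Q P G : GPoly d} (hQ : IsBracket Q P G) (n : ℕ)
    {R : ℝ} (hR : 0 ≤ R) :
    (Q.part n).norm R * R ^ 2 ≤ bracketConst n *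
      ∑ ij ∈ antidiagonal n, (P.part (ij.1 + 1)).norm R * (G.part (ij.2 + 1)).norm R := by
  set S := ∑ ij ∈ antidiagonal n, (P.part (ij.1 + 1)).norm R * (G.part (ij.2 + 1)).norm R
  have hS : 0 ≤ S := sum_nonneg fun ij _ =>
    mul_nonneg ((P.part _).norm_nonneg hR) ((G.part _).norm_nonneg hR)
  have hterm : ∀ x ∈ antidiagonal (multideg (id : Fin n → Fin n)),
      2 * (P.derivCoeffBound x.1 * G.derivCoeffBound x.2) * R ^ (n + 2)
        ≤ 2 * (n + 1) ^ (n + 2) * S := fun x hx => by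
    have hx' : (x.1.degree, x.2.degree) ∈ antidiagonal n :=
      mem_antidiagonal.2 (degree_add_degree_of_mem_antidiagonal hx)
    have := (derivCoeffBound_mul_le (P := P) (G := G) hR hx).trans
      (mul_le_mul_of_nonneg_left (single_le_sum
        (f := fun ij : ℕ × ℕ => (P.part (ij.1 + 1)).norm R * (G.part (ij.2 + 1)).norm R)
        (fun ij _ => mul_nonneg ((P.part _).norm_nonneg hR) ((G.part _).norm_nonneg hR)) hx')
        (by positivity))
    linarith
  calc (Q.part n).norm R * R ^ 2 = (Q.part n).coeffSup * R ^ (n + 2) := by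
        rw [Poly.norm_eq_coeffSup_mul, pow_add, mul_assoc]
    _ ≤ (∑ x ∈ antidiagonal (multideg (id : Fin n → Fin n)),
          2 * (P.derivCoeffBound x.1 * G.derivCoeffBound x.2)) * R ^ (n + 2) := by
        gcongr
        exact ciSup_le fun N => norm_coeff_le_of_isBracket hQ N
    _ ≤ ∑ x ∈ antidiagonal (multideg (id : Fin n → Fin n)), 2 * (n + 1) ^ (n + 2) * S := by
        rw [sum_mul]
        exact sum_le_sum hterm
    _ ≤ 2 ^ n * (2 * (n + 1) ^ (n + 2) * S) := by
        rw [sum_const, nsmul_eq_mul]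
        gcongr
        have := card_antidiagonal_le (multideg (id : Fin n → Fin n))
        rw [degree_multideg, Fintype.card_fin] at this
        exact_mod_cast this
    _ = bracketConst n * S := by unfold bracketConst; ring

lemma GPoly.summable_norm_part (P : GPoly d) (R : ℝ) : Summable fun r => (P.part r).norm R :=
  summable_of_ne_finset_zero (s := P.degrees) fun r hr => by
    rw [Poly.norm_eq_coeffSup_mul, Poly.coeffSup_eq_zero (P.coeff_eq_zero_of_notMem_degrees hr),
      zero_mul]

lemma GPoly.norm_nonneg (P : GPoly d) {R : ℝ} (hR : 0 ≤ R) : 0 ≤ P.norm R :=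
  tsum_nonneg fun r => (P.part r).norm_nonneg hR

lemma GPoly.tsum_norm_part_succ_le (P : GPoly d) {R : ℝ} (hR : 0 ≤ R) :
    ∑' i, (P.part (i + 1)).norm R ≤ P.norm R := by
  rw [GPoly.norm, (P.summable_norm_part R).tsum_eq_zero_add]
  linarith [(P.part 0).norm_nonneg hR]

lemma norm_le_of_isBracket {Q P G : GPoly d} (hQ : IsBracket Q P G) {D₁ D₂ : ℕ}
    (hP : P.InRange 0 D₁) (hG : G.InRange 0 D₂) {R : ℝ} (hR : 0 < R) :
    Q.norm R ≤ bracketConst (D₁ + D₂) * G.norm R / R ^ 2 * P.norm R := by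
  set f : ℕ → ℝ := fun i => (P.part (i + 1)).norm R
  set g : ℕ → ℝ := fun j => (G.part (j + 1)).norm R
  have hf : Summable f := (P.summable_norm_part R).comp_injective (add_left_injective 1)
  have hg : Summable g := (G.summable_norm_part R).comp_injective (add_left_injective 1)
  have hfg : Summable fun x : ℕ × ℕ => f x.1 * g x.2 := hf.mul_of_nonneg hg
    (fun i => (P.part _).norm_nonneg hR.le) (fun j => (G.part _).norm_nonneg hR.le)
  have hpart : ∀ n, (Q.part n).norm R * R ^ 2
      ≤ bracketConst (D₁ + D₂) * ∑ ij ∈ antidiagonal n, f ij.1 * g ij.2 := by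
    intro n
    have hsum : 0 ≤ ∑ ij ∈ antidiagonal n, f ij.1 * g ij.2 := sum_nonneg fun ij _ =>
      mul_nonneg ((P.part _).norm_nonneg hR.le) ((G.part _).norm_nonneg hR.le)
    by_cases hn : n ≤ D₁ + D₂
    · exact (norm_part_mul_sq_le_of_isBracket hQ n hR.le).trans
        (mul_le_mul_of_nonneg_right (bracketConst_mono hn) hsum)
    · rw [Poly.norm_eq_coeffSup_mul, Poly.coeffSup_eq_zero
        (inRange_of_isBracket hQ hP hG n (Or.inr (by omega))), zero_mul, zero_mul]
      exact mul_nonneg (bracketConst_pos _).le hsum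
  rw [div_mul_eq_mul_div, le_div_iff₀ (by positivity)]
  calc Q.norm R * R ^ 2 = ∑' n, (Q.part n).norm R * R ^ 2 := tsum_mul_right.symm
    _ ≤ ∑' n, bracketConst (D₁ + D₂) * ∑ ij ∈ antidiagonal n, f ij.1 * g ij.2 :=
        Summable.tsum_le_tsum hpart ((Q.summable_norm_part R).mul_right _)
          ((summable_sum_mul_antidiagonal_of_summable_mul hfg).mul_left _)
    _ = bracketConst (D₁ + D₂) * ((∑' i, f i) * ∑' j, g j) := by
        rw [tsum_mul_left, hf.tsum_mul_tsum_eq_tsum_sum_antidiagonal hg hfg]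
    _ ≤ bracketConst (D₁ + D₂) * (P.norm R * G.norm R) :=
        mul_le_mul_of_nonneg_left (mul_le_mul (P.tsum_norm_part_succ_le hR.le)
          (G.tsum_norm_part_succ_le hR.le) (tsum_nonneg fun j => (G.part _).norm_nonneg hR.le)
          (P.norm_nonneg hR.le)) (bracketConst_pos _).le
    _ = bracketConst (D₁ + D₂) * G.norm R * P.norm R := by ring

lemma inRange_iterate {G : GPoly d} {A : ℕ → GPoly d} (hA : ∀ k, IsBracket (A (k + 1)) (A k) G)
    {D E : ℕ} (hG : G.InRange 0 D) (hA0 : (A 0).InRange 0 E) (k : ℕ) :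
    (A k).InRange 0 (E + k * D) := by
  induction k with
  | zero => simpa using hA0
  | succ k ih => exact (inRange_of_isBracket (hA k) ih hG).mono le_rfl (by rw [add_mul]; omega)

end Estimates

theorem stmt_7_general (d : ℕ) (rbar r₁ r₂ r₃ r₄ : ℕ)
    (h1 : 3 ≤ r₁) (h2 : r₂ ≤ rbar) (h4 : r₄ ≤ rbar)
    (nbar : ℕ)
    (hnbarLeast : ∀ m : ℕ, rbar < (m + 1) * (r₁ - 2) + r₂ → nbar ≤ m) :
    ∃ C : ℝ, 0 < C ∧ ∀ G F : GPoly d, G.InRange r₁ r₂ → F.InRange r₃ r₄ →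
      ∀ A : ℕ → GPoly d, A 0 = F → (∀ k : ℕ, IsBracket (A (k + 1)) (A k) G) →
      ∀ k : ℕ, k ≤ nbar → ∀ R : ℝ, 0 < R →
        (A k).norm R ≤ (C * G.norm R / R ^ 2) ^ k * F.norm R := by
  have hnbar_le : nbar ≤ rbar := hnbarLeast rbar <| by
    have : rbar + 1 ≤ (rbar + 1) * (r₁ - 2) := Nat.le_mul_of_pos_right _ (by omega)
    omega
  refine ⟨bracketConst (rbar * (rbar + 2)), bracketConst_pos _, ?_⟩
  intro G F hG hF A hA0 hA k hk R hR
  have hG' : G.InRange 0 r₂ := hG.mono (Nat.zero_le _) le_rfl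
  have hdeg := inRange_iterate hA hG' (hA0 ▸ hF.mono (Nat.zero_le _) le_rfl)
  rw [← hA0]
  refine le_geom (u := fun j => (A j).norm R) (div_nonneg (mul_nonneg (bracketConst_pos _).le
    (G.norm_nonneg hR.le)) (by positivity)) k fun j hj => ?_
  refine (norm_le_of_isBracket (hA j) (hdeg j) hG' hR).trans ?_
  gcongr
  · exact (A j).norm_nonneg hR.le
  · exact G.norm_nonneg hR.le
  · refine bracketConst_mono ?_
    nlinarith

/-- Corollary on the iterated adjoint action.
Let `G ∈ 𝒫_{r₁,r₂}`, `F ∈ 𝒫_{r₃,r₄}` with `3 ≤ r₁ ≤ r₂` and all degrees `≤ r̄`, and let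
`n̄` be the smallest integer with `(n̄+1)(r₁−2)+r₂ > r̄`.  Then there is `C = C_{r̄} > 0`
such that for every `k ≤ n̄` and every `R > 0`,
`‖(Ad_G)^k F‖_R ≤ (C ‖G‖_R / R²)^k ‖F‖_R`. -/
theorem stmt_7 (d : ℕ) (hd : 1 ≤ d) (rbar r₁ r₂ r₃ r₄ : ℕ)
    (h1 : 3 ≤ r₁) (h12 : r₁ ≤ r₂) (h2 : r₂ ≤ rbar) (h3 : r₃ ≤ rbar) (h4 : r₄ ≤ rbar)
    (nbar : ℕ) (hnbar : rbar < (nbar + 1) * (r₁ - 2) + r₂)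
    (hnbarLeast : ∀ m : ℕ, rbar < (m + 1) * (r₁ - 2) + r₂ → nbar ≤ m) :
    ∃ C : ℝ, 0 < C ∧ ∀ G F : GPoly d, G.InRange r₁ r₂ → F.InRange r₃ r₄ →
      ∀ A : ℕ → GPoly d, A 0 = F → (∀ k : ℕ, IsBracket (A (k + 1)) (A k) G) →
      ∀ k : ℕ, k ≤ nbar → ∀ R : ℝ, 0 < R →
        (A k).norm R ≤ (C * G.norm R / R ^ 2) ^ k * F.norm R :=
  stmt_7_general d rbar r₁ r₂ r₃ r₄ h1 h2 h4 nbar hnbarLeast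

end AG
end
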